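/- Let b ≤ N and let P_1, ..., P_b be polynomials of degree less than N whose images span the quotient space Π_N / Π_{N-b}. Let B be b linear functionals on polynomials such that the matrix with columns B(x^0), ..., B(x^{b-1}) is invertible. Then for any polynomial f of degree less than N and any g ∈ ℝ^b, there exist a unique polynomial u of degree less than N and unique scalars τ_1, ..., τ_b such that ∂^b u + Σ_k τ_k P_k = f and B(u) = g. -/

import Mathlib

/-!
The map `(u, τ) ↦ (∂^b u + Σ τ_k P_k, B u)` is an endomorphism of the finite-dimensional space
`Π_N × ℝ^b`, so it suffices to show it is injective. Modulo `Π_{N-b}` the term `∂^b u` vanishes,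
and the classes of the `P_k` are `b` vectors spanning the `b`-dimensional space
`Π_N / Π_{N-b}`, hence independent: so `τ = 0`. Then `∂^b u = 0` puts `u` in `Π_b`, where `B`
acts through the invertible matrix `(B(x^j))` on the coefficients of `u`, so `u = 0`.
-/

open Polynomial Module Matrix

theorem Submodule.finrank_map_mkQ_add_finrank {K V : Type*} [DivisionRing K] [AddCommGroup V]
    [Module K V] {p q : Submodule K V} [FiniteDimensional K q] (hpq : p ≤ q) :
    finrank K (q.map p.mkQ) + finrank K p = finrank K q := by
  have := (p.mkQ ∘ₗ q.subtype).finrank_range_add_finrank_ker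
  rwa [LinearMap.range_comp, range_subtype, LinearMap.ker_comp, ker_mkQ,
    (comapSubtypeEquivOfLe hpq).finrank_eq] at this

theorem LinearMap.existsUnique_mem_apply_eq {K V : Type*} [Field K] [AddCommGroup V] [Module K V]
    (T : V →ₗ[K] V) {p : Submodule K V} [FiniteDimensional K p] (hTp : ∀ x ∈ p, T x ∈ p)
    (hT : ∀ x ∈ p, T x = 0 → x = 0) {y : V} (hy : y ∈ p) : ∃! x, x ∈ p ∧ T x = y := by
  have hinj : Function.Injective (T.restrict hTp) := by
    rw [← ker_eq_bot, ker_eq_bot']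
    exact fun x hx => Subtype.ext (hT x x.2 (congrArg Subtype.val hx))
  obtain ⟨x, hx⟩ := (injective_iff_surjective.mp hinj) ⟨y, hy⟩
  have hTx : T x = y := congrArg Subtype.val hx
  refine ⟨x, ⟨x.2, hTx⟩, fun x' ⟨hx'p, hx'⟩ => ?_⟩
  have : T (x' - x) = 0 := by rw [map_sub, hx', hTx, sub_self]
  exact sub_eq_zero.mp (hT _ (sub_mem hx'p x.2) this)

instance Submodule.finite_prod {R M M' : Type*} [Semiring R] [AddCommMonoid M] [Module R M]
    [AddCommMonoid M'] [Module R M'] (p : Submodule R M) (q : Submodule R M') [Module.Finite R p]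
    [Module.Finite R q] : Module.Finite R (p.prod q) := by
  rw [← p.range_subtype, ← q.range_subtype, ← LinearMap.range_prodMap]
  infer_instance

namespace Polynomial

section Semiring

variable {R : Type*} [Semiring R]

theorem iterate_derivative_mem_degreeLT {n : ℕ} (m : ℕ) {q : R[X]} (hq : q ∈ degreeLT R n) :
    derivative^[m] q ∈ degreeLT R (n - m) := by
  rw [mem_degreeLT, degree_lt_iff_coeff_zero] at hq ⊢
  intro i hi
  rw [coeff_iterate_derivative, hq (i + m) (by omega), smul_zero]

theorem mem_degreeLT_of_iterate_derivative_eq_zero [IsAddTorsionFree R] {m : ℕ} {q : R[X]}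
    (hq : derivative^[m] q = 0) : q ∈ degreeLT R m := by
  rw [mem_degreeLT, degree_lt_iff_coeff_zero]
  intro i hi
  have hcoeff := coeff_iterate_derivative (k := m) q (i - m)
  rw [hq, Nat.sub_add_cancel hi, coeff_zero, eq_comm, smul_eq_zero] at hcoeff
  exact hcoeff.resolve_left (Nat.descFactorial_eq_zero_iff_lt.not.2 (by omega))

end Semiring

theorem apply_eq_mulVec_coeff {R : Type*} [CommRing R] {n : ℕ} (B : R[X] →ₗ[R] (Fin n → R))
    {u : R[X]} (hu : u ∈ degreeLT R n) :
    B u = (Matrix.of fun i j : Fin n => B (X ^ (j : ℕ)) i) *ᵥ fun j => u.coeff j := by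
  have hsum : ∑ j : Fin n, u.coeff j • X ^ (j : ℕ) = u := by
    simpa using congrArg Subtype.val ((degreeLT.basis R n).sum_repr ⟨u, hu⟩)
  conv_lhs => rw [← hsum]
  ext i
  simp [Matrix.mulVec, dotProduct, mul_comm]

theorem eq_zero_of_mem_degreeLT_of_apply_eq_zero {K : Type*} [Field K] {n : ℕ}
    {B : K[X] →ₗ[K] (Fin n → K)}
    (hB : (Matrix.of fun i j : Fin n => B (X ^ (j : ℕ)) i).det ≠ 0)
    {u : K[X]} (hu : u ∈ degreeLT K n) (hBu : B u = 0) : u = 0 := by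
  rw [← degreeLTEquiv_eq_zero_iff_eq_zero hu]
  exact Matrix.eq_zero_of_mulVec_eq_zero hB (apply_eq_mulVec_coeff B hu ▸ hBu)

end Polynomial

section TauSystem

variable {K : Type*} [Field K] {b : ℕ} (P : Fin b → K[X]) (B : K[X] →ₗ[K] (Fin b → K))

noncomputable def tauSystem : K[X] × (Fin b → K) →ₗ[K] K[X] × (Fin b → K) :=
  ((derivative ^ b : Module.End K K[X]) ∘ₗ LinearMap.fst K _ _ +
      Fintype.linearCombination K P ∘ₗ LinearMap.snd K _ _).prod (B ∘ₗ LinearMap.fst K _ _)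

@[simp]
theorem tauSystem_apply (w : K[X] × (Fin b → K)) :
    tauSystem P B w = (derivative^[b] w.1 + ∑ k, w.2 k • P k, B w.1) := by
  simp [tauSystem, Module.End.pow_apply, Fintype.linearCombination_apply]

variable {P B} {N : ℕ}

theorem tauSystem_mem_prod_degreeLT (hPmem : ∀ k, P k ∈ degreeLT K N)
    {w : K[X] × (Fin b → K)} (hw : w ∈ (degreeLT K N).prod ⊤) :
    tauSystem P B w ∈ (degreeLT K N).prod ⊤ := by
  refine ⟨?_, trivial⟩
  rw [tauSystem_apply]
  exact add_mem (degreeLT_mono (N.sub_le b) (iterate_derivative_mem_degreeLT b hw.1))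
    (sum_mem fun k _ => Submodule.smul_mem _ _ (hPmem k))

theorem linearIndependent_mkQ_of_span_eq (hbN : b ≤ N)
    (hPspan : Submodule.span K (Set.range fun k => (degreeLT K (N - b)).mkQ (P k)) =
      (degreeLT K N).map (degreeLT K (N - b)).mkQ) :
    LinearIndependent K fun k => (degreeLT K (N - b)).mkQ (P k) := by
  have hrank := Submodule.finrank_map_mkQ_add_finrank
    (degreeLT_mono (N.sub_le b) : degreeLT K (N - b) ≤ degreeLT K N)
  simp only [finrank_eq_card_basis (degreeLT.basis K _), Fintype.card_fin] at hrank
  rw [linearIndependent_iff_card_eq_finrank_span, Set.finrank, hPspan, Fintype.card_fin]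
  omega

theorem eq_zero_of_tauSystem_eq_zero [CharZero K] (hbN : b ≤ N)
    (hPspan : Submodule.span K (Set.range fun k => (degreeLT K (N - b)).mkQ (P k)) =
      (degreeLT K N).map (degreeLT K (N - b)).mkQ)
    (hB : (Matrix.of fun i j : Fin b => B (X ^ (j : ℕ)) i).det ≠ 0)
    {w : K[X] × (Fin b → K)} (hw : w ∈ (degreeLT K N).prod ⊤) (hTw : tauSystem P B w = 0) :
    w = 0 := by
  obtain ⟨u, τ⟩ := w
  simp only [tauSystem_apply, Prod.mk_eq_zero] at hTw
  obtain ⟨hsum, hBu⟩ := hTw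
  have hτ : τ = 0 := by
    have hderiv : (degreeLT K (N - b)).mkQ (derivative^[b] u) = 0 :=
      (Submodule.Quotient.mk_eq_zero _).2 (iterate_derivative_mem_degreeLT b hw.1)
    have hclasses := congrArg (degreeLT K (N - b)).mkQ hsum
    rw [map_add, map_sum, hderiv] at hclasses
    simp only [map_smul, map_zero, zero_add] at hclasses
    exact funext <|
      Fintype.linearIndependent_iff.1 (linearIndependent_mkQ_of_span_eq hbN hPspan) τ hclasses
  subst hτ
  simp only [Pi.zero_apply, zero_smul, Finset.sum_const_zero, add_zero] at hsum
  have hu : u = 0 := eq_zero_of_mem_degreeLT_of_apply_eq_zero hB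
    (mem_degreeLT_of_iterate_derivative_eq_zero hsum) hBu
  rw [hu, Prod.mk_zero_zero]

end TauSystem

theorem tau_diff_same_order_general
    (b N : ℕ) (hbN : b ≤ N)
    (P : Fin b → ℝ[X]) (hPmem : ∀ k, P k ∈ Polynomial.degreeLT ℝ N)
    (hPspan :
      Submodule.span ℝ
        (Set.range fun k : Fin b =>
          (Polynomial.degreeLT ℝ (N - b)).mkQ (P k)) =
      Submodule.map (Polynomial.degreeLT ℝ (N - b)).mkQ (Polynomial.degreeLT ℝ N))
    (B : ℝ[X] →ₗ[ℝ] (Fin b → ℝ))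
    (hB : (Matrix.of fun i j : Fin b => B (Polynomial.X ^ (j : ℕ)) i).det ≠ 0)
    (f : ℝ[X]) (hf : f ∈ Polynomial.degreeLT ℝ N)
    (g : Fin b → ℝ) :
    ∃! w : ℝ[X] × (Fin b → ℝ),
      w.1 ∈ Polynomial.degreeLT ℝ N ∧
      Polynomial.derivative^[b] w.1 + ∑ k, w.2 k • P k = f ∧
      B w.1 = g := by
  have := (tauSystem P B).existsUnique_mem_apply_eq (p := (degreeLT ℝ N).prod ⊤)
    (fun _ => tauSystem_mem_prod_degreeLT hPmem)
    (fun _ => eq_zero_of_tauSystem_eq_zero hbN hPspan hB) (y := (f, g)) ⟨hf, trivial⟩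
  simpa [Prod.ext_iff] using this

/-- **Lemma 2.2.** For `∂^b u + Σ τ_k P_k = f` where the tau polynomials `P_k ∈ Π_N`
span the quotient `Π_N / Π_{N-b}`, and the boundary matrix on monomials is invertible,
there is a unique solution `(u, τ)` with `u ∈ Π_N`. -/
theorem tau_diff_same_order
    (b N : ℕ) (hb : 0 < b) (hbN : b ≤ N)
    (P : Fin b → ℝ[X]) (hPmem : ∀ k, P k ∈ Polynomial.degreeLT ℝ N)
    (hPspan :
      Submodule.span ℝ
        (Set.range fun k : Fin b =>
          (Polynomial.degreeLT ℝ (N - b)).mkQ (P k)) =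
      Submodule.map (Polynomial.degreeLT ℝ (N - b)).mkQ (Polynomial.degreeLT ℝ N))
    (B : ℝ[X] →ₗ[ℝ] (Fin b → ℝ))
    (hB : (Matrix.of fun i j : Fin b => B (Polynomial.X ^ (j : ℕ)) i).det ≠ 0)
    (f : ℝ[X]) (hf : f ∈ Polynomial.degreeLT ℝ N)
    (g : Fin b → ℝ) :
    ∃! w : ℝ[X] × (Fin b → ℝ),
      w.1 ∈ Polynomial.degreeLT ℝ N ∧
      Polynomial.derivative^[b] w.1 + ∑ k, w.2 k • P k = f ∧
      B w.1 = g :=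
  tau_diff_same_order_general b N hbN P hPmem hPspan B hB f hf g
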